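/- (Mean-zero property of the efficient influence function.) Fix z ∈ {1,...,J} and g ∈ {J−z+1,...,J} with P(G=g) > 0, and set μ_g(z) := E[Y_z·1(G=g)]/P(G=g). Define ψ_{S,w} := 1(Z=w)·(S − p_w(X))/π_w + p_w(X) for w ∈ {1,...,J}, with the convention ψ_{S,0} := 0; define ψ_{YS,z} := 1(Z=z)·(Y·S − m_z(X)·p_z(X))/π_z + m_z(X)·p_z(X); and define ξ_{zg} := ((p_{J−g+1}(X) − p_{J−g}(X))/p_z(X))·(ψ_{YS,z} − m_z(X)·ψ_{S,z}) + (m_z(X) − μ_g(z))·(ψ_{S,J−g+1} − ψ_{S,J−g}). Then, under randomization, monotonicity, principal ignorability and positivity, E[ξ_{zg}] = 0; equivalently, the influence function Ψ_{zg} := ξ_{zg}/(E[p_{J−g+1}(X)] − E[p_{J−g}(X)]) has mean zero. -/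

import Mathlib

open MeasureTheory ProbabilityTheory

noncomputable section

namespace TruncationByDeath

variable {Ω : Type*} {𝒳 : Type*} [MeasurableSpace Ω] [MeasurableSpace 𝒳]

/-- The σ-algebra on `Ω` generated by the covariate map `X`. -/
def mX (X : Ω → 𝒳) : MeasurableSpace Ω := MeasurableSpace.comap X inferInstance

/-- Real-valued indicator of the event `{Z = z}`. -/
def indic (Z : Ω → ℕ) (z : ℕ) : Ω → ℝ := fun ω => if Z ω = z then 1 else 0

/-- Observed survival status `S := ∑_z 1(Z=z) ⬝ S_z`. -/
def Sobs (J : ℕ) (Z : Ω → ℕ) (S : ℕ → Ω → ℝ) : Ω → ℝ :=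
  fun ω => ∑ z ∈ Finset.Icc 1 J, indic Z z ω * S z ω

/-- Observed outcome `Y := ∑_z 1(Z=z) ⬝ Y_z`. -/
def Yobs (J : ℕ) (Z : Ω → ℕ) (Y : ℕ → Ω → ℝ) : Ω → ℝ :=
  fun ω => ∑ z ∈ Finset.Icc 1 J, indic Z z ω * Y z ω

/-- Principal score `p_z(X) := E[S_z | σ(X)]`, with conventions `p_0 := 0` and `p_{J+1} := 1`. -/
def pscore (P : Measure Ω) (X : Ω → 𝒳) (S : ℕ → Ω → ℝ) (J : ℕ) (z : ℕ) : Ω → ℝ :=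
  if z = 0 then fun _ => 0 else if z = J + 1 then fun _ => 1 else P[S z | mX X]

/-- Treatment probability `π_z := P(Z = z)`. -/
def piZ (P : Measure Ω) (Z : Ω → ℕ) (z : ℕ) : ℝ := (P {ω | Z ω = z}).toReal

/-- Principal stratum variable `G := ∑_{z=1}^J S_z`. -/
def Gsum (J : ℕ) (S : ℕ → Ω → ℝ) : Ω → ℝ := fun ω => ∑ z ∈ Finset.Icc 1 J, S z ω

/-- Real-valued indicator of the event `{G = g}`. -/
def indG (J : ℕ) (S : ℕ → Ω → ℝ) (g : ℕ) : Ω → ℝ :=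
  Set.indicator {ω | Gsum J S ω = (g : ℝ)} (fun _ => (1 : ℝ))

/-- Principal score of the stratum `g` : `e_g(X) := E[1(G=g) | σ(X)]`. -/
def eg (P : Measure Ω) (X : Ω → 𝒳) (J : ℕ) (S : ℕ → Ω → ℝ) (g : ℕ) : Ω → ℝ :=
  P[indG J S g | mX X]

/-- Basic setup: measurability, ranges, values and integrability of the primitives. -/
structure Setup (P : Measure Ω) (J : ℕ) (X : Ω → 𝒳) (Z : Ω → ℕ)
    (S Y : ℕ → Ω → ℝ) : Prop where
  hJ : 2 ≤ J
  hX : Measurable X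
  hZ : Measurable Z
  hZr : ∀ ω, Z ω ∈ Finset.Icc 1 J
  hSm : ∀ z, Measurable (S z)
  hS01 : ∀ z ω, S z ω = 0 ∨ S z ω = 1
  hYm : ∀ z, Measurable (Y z)
  hYint : ∀ z, Integrable (Y z) P

/-- Randomization : `Z` is independent of `(X, S_1,…,S_J, Y_1,…,Y_J)` and `π_z > 0` for all
`z ∈ {1,…,J}`. -/
def Randomization (P : Measure Ω) (J : ℕ) (X : Ω → 𝒳) (Z : Ω → ℕ)
    (S Y : ℕ → Ω → ℝ) : Prop :=
  IndepFun Z (fun ω => (X ω, fun z => S z ω, fun z => Y z ω)) P ∧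
    ∀ z ∈ Finset.Icc 1 J, 0 < piZ P Z z

/-- Monotonicity : `S_{z'} ≤ S_z` a.s. whenever `z' ≤ z`. -/
def Monotonicity (P : Measure Ω) (J : ℕ) (S : ℕ → Ω → ℝ) : Prop :=
  ∀ z ∈ Finset.Icc 1 J, ∀ z' ∈ Finset.Icc 1 J, z' ≤ z → ∀ᵐ ω ∂P, S z' ω ≤ S z ω

/-- Principal ignorability. -/
def PrincipalIgnorability (P : Measure Ω) (J : ℕ) (X : Ω → 𝒳)
    (S Y : ℕ → Ω → ℝ) : Prop :=
  ∀ z ∈ Finset.Icc 1 J, ∀ g ∈ Finset.Icc (J - z + 1) J, ∀ g' ∈ Finset.Icc (J - z + 1) J,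
    (fun ω => (P[fun ω' => Y z ω' * indG J S g ω' | mX X]) ω * eg P X J S g' ω)
      =ᵐ[P] fun ω => (P[fun ω' => Y z ω' * indG J S g' ω' | mX X]) ω * eg P X J S g ω

/-- Positivity : the principal scores are uniformly bounded away from zero. -/
def Positivity (P : Measure Ω) (J : ℕ) (X : Ω → 𝒳) (S : ℕ → Ω → ℝ) : Prop :=
  ∃ c : ℝ, 0 < c ∧ ∀ z ∈ Finset.Icc 1 J, ∀ᵐ ω ∂P, c ≤ pscore P X S J z ω

/-- Augmented survival term `ψ_{S,w} := 1(Z=w)(S − p_w(X))/π_w + p_w(X)`, with the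
convention `ψ_{S,0} := 0`. -/
def psiS (P : Measure Ω) (X : Ω → 𝒳) (Z : Ω → ℕ) (S : ℕ → Ω → ℝ) (J w : ℕ) : Ω → ℝ :=
  if w = 0 then fun _ => 0
  else fun ω =>
    indic Z w ω * (Sobs J Z S ω - pscore P X S J w ω) / piZ P Z w + pscore P X S J w ω

/-!
Write `q = (p_{J-g+1} - p_{J-g}) / p_z`. Pointwise
`ψ_{YS,z} - m_z ψ_{S,z} = 1(Z=z) (Y_z - m_z) S_z / π_z`, so by randomization the first term of
`ξ_{zg}` has mean `E[q (Y_z - m_z) S_z]`, which vanishes by the tower property because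
`E[Y_z S_z | X] = m_z p_z` (the defining identity of `m_z`, read through randomization). In the
same way `E[u ψ_{S,w}] = E[u p_w]` for every `σ(X)`-measurable `u`.

Under monotonicity `S_w = 1(G ≥ J - w + 1)`, hence `e_g = p_{J-g+1} - p_{J-g}`, and `{S_z = 1}`
is the union of the strata `g' ≥ J - z + 1`; summing principal ignorability over these strata
gives `E[Y_z 1(G=g) | X] = m_z e_g`. The second term therefore has mean
`E[(m_z - μ_g) e_g] = E[Y_z 1(G=g)] - μ_g P(G=g) = 0`.
-/
end TruncationByDeath

theorem exists_threshold_of_monotoneOn {J : ℕ} {f : ℕ → ℝ} (h01 : ∀ w, f w = 0 ∨ f w = 1)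
    (hf : MonotoneOn f (Set.Icc 1 J)) :
    ∃ n ≤ J, ∑ w ∈ Finset.Icc 1 J, f w = n ∧
      ∀ w ∈ Finset.Icc 1 J, f w = if J < w + n then 1 else 0 := by
  classical
  set t := (Finset.Icc 1 J).filter (f · = 1)
  have hsum : ∑ w ∈ Finset.Icc 1 J, f w = t.card := by
    rw [← Finset.sum_boole]
    refine Finset.sum_congr rfl fun w _ => ?_
    rcases h01 w with h | h <;> simp [h]
  refine ⟨t.card, (Finset.card_filter_le _ _).trans (by simp), hsum, fun w hw => ?_⟩
  have hw' := Finset.mem_Icc.mp hw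
  rcases h01 w with h0 | h1
  · have hsub : t ⊆ Finset.Icc (w + 1) J := fun u hu => by
      obtain ⟨hu, hfu⟩ := Finset.mem_filter.mp hu
      have hu' := Finset.mem_Icc.mp hu
      refine Finset.mem_Icc.mpr ⟨Nat.succ_le_of_lt (lt_of_not_ge fun hle => ?_), hu'.2⟩
      have := hf (Set.mem_Icc.mpr hu') (Set.mem_Icc.mpr hw') hle
      linarith
    have := (Finset.card_le_card hsub).trans_eq (Nat.card_Icc _ _)
    rw [h0, if_neg (by omega)]
  · have hsub : Finset.Icc w J ⊆ t := fun u hu => by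
      have hu' := Finset.mem_Icc.mp hu
      have hmem : u ∈ Finset.Icc 1 J := Finset.mem_Icc.mpr ⟨hw'.1.trans hu'.1, hu'.2⟩
      refine Finset.mem_filter.mpr ⟨hmem, ?_⟩
      have := hf (Set.mem_Icc.mpr hw') (Set.mem_Icc.mpr (Finset.mem_Icc.mp hmem)) hu'.1
      rcases h01 u with h | h
      · linarith
      · exact h
    have := (Nat.card_Icc w J).symm.trans_le (Finset.card_le_card hsub)
    rw [h1, if_pos (by omega)]

theorem eq_mul_of_forall_mul_eq_mul {ι : Type*} {s : Finset ι} {a e : ι → ℝ} {i : ι} {m : ℝ}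
    (hcross : ∀ j ∈ s, a i * e j = a j * e i) (hsum : ∑ j ∈ s, a j = m * ∑ j ∈ s, e j)
    (hne : ∑ j ∈ s, e j ≠ 0) : a i = m * e i := by
  refine mul_right_cancel₀ hne ?_
  calc a i * ∑ j ∈ s, e j = (∑ j ∈ s, a j) * e i := by
        rw [Finset.mul_sum, Finset.sum_mul]; exact Finset.sum_congr rfl hcross
    _ = m * e i * ∑ j ∈ s, e j := by rw [hsum]; ring

namespace MeasureTheory

theorem integrable_of_mul_eq {Ω : Type*} [MeasurableSpace Ω] {μ : Measure Ω} {f g h : Ω → ℝ}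
    {c : ℝ} (hc : 0 < c)
    (hf : AEStronglyMeasurable f μ) (hh : Integrable h μ) (hg : ∀ᵐ ω ∂μ, c ≤ g ω)
    (hfg : ∀ᵐ ω ∂μ, f ω * g ω = h ω) : Integrable f μ := by
  refine (hh.abs.div_const c).mono' hf ?_
  filter_upwards [hg, hfg] with ω hgω hfgω
  rw [Real.norm_eq_abs, le_div_iff₀ hc, ← hfgω, abs_mul, abs_of_pos (hc.trans_le hgω)]
  exact mul_le_mul_of_nonneg_left hgω (abs_nonneg _)

theorem integral_mul_condExp {Ω : Type*} {m m₀ : MeasurableSpace Ω} {μ : Measure[m₀] Ω}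
    [IsFiniteMeasure μ] (hm : m ≤ m₀) {u V : Ω → ℝ} (hu : StronglyMeasurable[m] u)
    (huV : Integrable (u * V) μ) (hV : Integrable V μ) :
    ∫ ω, u ω * V ω ∂μ = ∫ ω, u ω * μ[V | m] ω ∂μ := by
  rw [← integral_condExp hm]
  exact integral_congr_ae (condExp_mul_of_stronglyMeasurable_left hu huV hV)

end MeasureTheory

namespace TruncationByDeath

variable {Ω 𝒳 : Type*}

theorem abs_indic_le_one (Z : Ω → ℕ) (w : ℕ) (ω : Ω) : |indic Z w ω| ≤ 1 := by
  unfold indic; split_ifs <;> norm_num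

theorem indG_apply (J : ℕ) (S : ℕ → Ω → ℝ) (g : ℕ) (ω : Ω) :
    indG J S g ω = if Gsum J S ω = g then 1 else 0 := by
  simp [indG, Set.indicator_apply]

theorem comap_indic_le (Z : Ω → ℕ) (w : ℕ) :
    MeasurableSpace.comap (indic Z w) inferInstance ≤ MeasurableSpace.comap Z inferInstance :=
  Measurable.comap_le <| (measurable_from_top (f := fun n : ℕ => if n = w then (1 : ℝ) else 0)).comp
    (Measurable.of_comap_le le_rfl)

def mXSY [MeasurableSpace 𝒳] (X : Ω → 𝒳) (S Y : ℕ → Ω → ℝ) : MeasurableSpace Ω :=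
  MeasurableSpace.comap (fun ω => (X ω, fun z => S z ω, fun z => Y z ω)) inferInstance

section PotentialOutcomes

variable [MeasurableSpace 𝒳] {X : Ω → 𝒳} {S Y : ℕ → Ω → ℝ}

theorem measurable_mXSY :
    Measurable[mXSY X S Y] (fun ω => (X ω, fun z => S z ω, fun z => Y z ω)) :=
  Measurable.of_comap_le le_rfl

theorem mX_le_mXSY : mX X ≤ mXSY X S Y :=
  (measurable_fst.comp measurable_mXSY).comap_le

theorem measurable_S_mXSY (w : ℕ) : Measurable[mXSY X S Y] (S w) :=
  (measurable_pi_apply w).comp ((measurable_fst.comp measurable_snd).comp measurable_mXSY)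

theorem measurable_Y_mXSY (w : ℕ) : Measurable[mXSY X S Y] (Y w) :=
  (measurable_pi_apply w).comp ((measurable_snd.comp measurable_snd).comp measurable_mXSY)

end PotentialOutcomes

variable [MeasurableSpace Ω] [MeasurableSpace 𝒳]

section Independence

variable {β : Type*} [MeasurableSpace β] {P : Measure Ω} {Z : Ω → ℕ}
  {T : Ω → β} {H : Ω → ℝ}

theorem measurable_indic (hZ : Measurable Z) (w : ℕ) : Measurable (indic Z w) :=
  measurable_const.ite (hZ (measurableSet_singleton w)) measurable_const

theorem integral_indic (hZ : Measurable Z) (w : ℕ) : ∫ ω, indic Z w ω ∂P = piZ P Z w := by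
  have : indic Z w = (Z ⁻¹' {w}).indicator 1 := by
    ext ω; by_cases h : Z ω = w <;> simp [indic, h]
  rw [this, integral_indicator_one (hZ (measurableSet_singleton w))]
  rfl

theorem integrable_indic_mul (hZ : Measurable Z) (hH : Integrable H P) (w : ℕ) :
    Integrable (fun ω => indic Z w ω * H ω) P :=
  hH.bdd_mul (measurable_indic hZ w).aestronglyMeasurable
    (ae_of_all _ (abs_indic_le_one Z w))

theorem integral_indic_mul_of_indepFun (hZ : Measurable Z) (hZT : IndepFun Z T P)
    (hH : Measurable[MeasurableSpace.comap T inferInstance] H) (hHi : Integrable H P) (w : ℕ) :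
    ∫ ω, indic Z w ω * H ω ∂P = piZ P Z w * ∫ ω, H ω ∂P := by
  have hind : IndepFun (indic Z w) H P := by
    rw [IndepFun_iff_Indep] at hZT ⊢
    exact indep_of_indep_of_le_left (indep_of_indep_of_le_right hZT hH.comap_le)
      (comap_indic_le Z w)
  rw [← integral_indic hZ w]
  exact hind.integral_mul_eq_mul_integral (measurable_indic hZ w).aestronglyMeasurable
    hHi.aestronglyMeasurable

theorem condExp_indic_mul_of_indepFun [IsFiniteMeasure P] {X : Ω → 𝒳}
    (hX : Measurable X) (hXT : mX X ≤ MeasurableSpace.comap T inferInstance)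
    (hZ : Measurable Z) (hZT : IndepFun Z T P)
    (hH : Measurable[MeasurableSpace.comap T inferInstance] H) (hHi : Integrable H P) (w : ℕ) :
    P[fun ω => indic Z w ω * H ω | mX X] =ᵐ[P] fun ω => piZ P Z w * P[H | mX X] ω := by
  refine (ae_eq_condExp_of_forall_setIntegral_eq hX.comap_le (integrable_indic_mul hZ hHi w)
    (fun s _ _ => (integrable_condExp.const_mul _).integrableOn) (fun s hs _ => ?_)
    (stronglyMeasurable_condExp.const_mul _).aestronglyMeasurable).symm
  have hsm := hX.comap_le s hs
  rw [integral_const_mul, setIntegral_condExp hX.comap_le hHi hs, ← integral_indicator hsm,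
    ← integral_indicator hsm, ← integral_indic_mul_of_indepFun hZ hZT
      (hH.indicator (hXT s hs)) (hHi.indicator hsm)]
  simp only [Set.indicator_mul_right]

end Independence

section Model

variable {P : Measure Ω} {J : ℕ} {X : Ω → 𝒳} {Z : Ω → ℕ} {S Y : ℕ → Ω → ℝ}

theorem Setup.mX_le (hset : Setup P J X Z S Y) : mX X ≤ ‹MeasurableSpace Ω› :=
  hset.hX.comap_le

theorem Setup.S_mem_Icc (hset : Setup P J X Z S Y) (w : ℕ) (ω : Ω) : S w ω ∈ Set.Icc 0 1 := by
  rcases hset.hS01 w ω with h | h <;> simp [h]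

theorem Setup.norm_S_le_one (hset : Setup P J X Z S Y) (w : ℕ) (ω : Ω) : ‖S w ω‖ ≤ 1 := by
  have := hset.S_mem_Icc w ω
  rw [Real.norm_eq_abs, abs_le]
  constructor <;> linarith [this.1, this.2]

theorem Setup.integrable_S [IsFiniteMeasure P] (hset : Setup P J X Z S Y) (w : ℕ) :
    Integrable (S w) P :=
  (integrable_const 1).mono' (hset.hSm w).aestronglyMeasurable
    (ae_of_all _ (hset.norm_S_le_one w))

theorem Setup.sobs_eq (hset : Setup P J X Z S Y) (ω : Ω) : Sobs J Z S ω = S (Z ω) ω := by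
  simp only [Sobs, indic, ite_mul, one_mul, zero_mul]
  rw [Finset.sum_ite_eq, if_pos (hset.hZr ω)]

theorem Setup.yobs_eq (hset : Setup P J X Z S Y) (ω : Ω) : Yobs J Z Y ω = Y (Z ω) ω := by
  simp only [Yobs, indic, ite_mul, one_mul, zero_mul]
  rw [Finset.sum_ite_eq, if_pos (hset.hZr ω)]

theorem pscore_of_mem_Icc {w : ℕ} (hw : w ∈ Finset.Icc 1 J) :
    pscore P X S J w = P[S w | mX X] := by
  have := Finset.mem_Icc.mp hw
  rw [pscore, if_neg (by omega), if_neg (by omega)]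

theorem measurable_pscore (w : ℕ) : Measurable[mX X] (pscore P X S J w) := by
  unfold pscore
  split_ifs
  · exact measurable_const
  · exact measurable_const
  · exact stronglyMeasurable_condExp.measurable

theorem Setup.pscore_mem_Icc [IsFiniteMeasure P] (hset : Setup P J X Z S Y) (w : ℕ) :
    ∀ᵐ ω ∂P, pscore P X S J w ω ∈ Set.Icc 0 1 := by
  unfold pscore
  split_ifs
  · simp
  · simp
  · filter_upwards [condExp_nonneg (m := mX X) (ae_of_all P fun ω => (hset.S_mem_Icc w ω).1),
      condExp_mono (m := mX X) (hset.integrable_S w) (integrable_const 1)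
        (ae_of_all P fun ω => (hset.S_mem_Icc w ω).2)] with ω h0 h1
    rw [condExp_const hset.mX_le] at h1
    exact ⟨h0, h1⟩

theorem Setup.norm_pscore_le_one [IsFiniteMeasure P] (hset : Setup P J X Z S Y) (w : ℕ) :
    ∀ᵐ ω ∂P, ‖pscore P X S J w ω‖ ≤ 1 := by
  filter_upwards [hset.pscore_mem_Icc w] with ω h
  rw [Real.norm_eq_abs, abs_le]
  constructor <;> linarith [h.1, h.2]

theorem Setup.norm_pscore_sub_div_le [IsFiniteMeasure P] (hset : Setup P J X Z S Y)
    {c : ℝ} (hc : 0 < c) {a b z : ℕ} (hcz : ∀ᵐ ω ∂P, c ≤ pscore P X S J z ω) :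
    ∀ᵐ ω ∂P, ‖(pscore P X S J a ω - pscore P X S J b ω) / pscore P X S J z ω‖ ≤ c⁻¹ := by
  filter_upwards [hset.pscore_mem_Icc a, hset.pscore_mem_Icc b, hcz] with ω ha hb hz
  have hpz := hc.trans_le hz
  rw [Real.norm_eq_abs, abs_div, abs_of_pos hpz, div_le_iff₀ hpz]
  calc |pscore P X S J a ω - pscore P X S J b ω| ≤ 1 :=
        abs_sub_le_of_nonneg_of_le ha.1 ha.2 hb.1 hb.2
    _ = c⁻¹ * c := (inv_mul_cancel₀ hc.ne').symm
    _ ≤ c⁻¹ * pscore P X S J z ω := by gcongr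

theorem Setup.psiS_eq (hset : Setup P J X Z S Y) {w : ℕ} (hw : w ≠ 0) (ω : Ω) :
    psiS P X Z S J w ω
      = indic Z w ω * (S w ω - pscore P X S J w ω) / piZ P Z w + pscore P X S J w ω := by
  simp only [psiS, if_neg hw]
  by_cases h : Z ω = w
  · rw [hset.sobs_eq, h]
  · simp [indic, h]

theorem Setup.measurable_psiS (hset : Setup P J X Z S Y) (w : ℕ) :
    Measurable (psiS P X Z S J w) := by
  rcases eq_or_ne w 0 with rfl | hw
  · simp only [psiS, if_pos]; exact measurable_const
  have hp := (measurable_pscore (P := P) (S := S) (J := J) w).mono hset.mX_le le_rfl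
  rw [show psiS P X Z S J w = _ from funext (hset.psiS_eq hw)]
  exact (((measurable_indic hset.hZ w).mul ((hset.hSm w).sub hp)).div_const _).add hp

theorem Setup.norm_psiS_le [IsFiniteMeasure P] (hset : Setup P J X Z S Y) (w : ℕ) :
    ∀ᵐ ω ∂P, ‖psiS P X Z S J w ω‖ ≤ 1 / piZ P Z w + 1 := by
  have hπ : 0 ≤ piZ P Z w := ENNReal.toReal_nonneg
  rcases eq_or_ne w 0 with rfl | hw
  · exact ae_of_all _ fun ω => by simp only [psiS, if_pos, norm_zero]; positivity
  filter_upwards [hset.pscore_mem_Icc w] with ω hp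
  have hS := hset.S_mem_Icc w ω
  rw [hset.psiS_eq hw, Real.norm_eq_abs]
  refine (abs_add_le _ _).trans (add_le_add ?_ (abs_le.mpr ⟨by linarith [hp.1], hp.2⟩))
  rw [abs_div, abs_of_nonneg hπ, abs_mul]
  gcongr
  calc |indic Z w ω| * |S w ω - pscore P X S J w ω| ≤ 1 * 1 :=
        mul_le_mul (abs_indic_le_one Z w ω) (abs_sub_le_of_nonneg_of_le hS.1 hS.2 hp.1 hp.2)
          (abs_nonneg _) zero_le_one
    _ = 1 := one_mul 1

theorem Setup.integrable_mul_psiS [IsFiniteMeasure P] (hset : Setup P J X Z S Y)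
    {u : Ω → ℝ} (hu : Integrable u P) (w : ℕ) :
    Integrable (fun ω => u ω * psiS P X Z S J w ω) P :=
  hu.mul_bdd (hset.measurable_psiS w).aestronglyMeasurable (hset.norm_psiS_le w)

theorem Setup.integrable_mul_pscore [IsFiniteMeasure P] (hset : Setup P J X Z S Y)
    {u : Ω → ℝ} (hu : Integrable u P) (w : ℕ) :
    Integrable (fun ω => u ω * pscore P X S J w ω) P :=
  hu.mul_bdd ((measurable_pscore w).mono hset.mX_le le_rfl).aestronglyMeasurable
    (hset.norm_pscore_le_one w)

theorem Setup.integrable_Y_mul_S (hset : Setup P J X Z S Y) (z : ℕ) :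
    Integrable (fun ω => Y z ω * S z ω) P :=
  (hset.hYint z).mul_bdd (hset.hSm z).aestronglyMeasurable (ae_of_all _ (hset.norm_S_le_one z))

theorem Setup.integral_mul_psiS [IsFiniteMeasure P] (hset : Setup P J X Z S Y)
    (hrand : Randomization P J X Z S Y) {u : Ω → ℝ} (hu : Measurable[mX X] u)
    (hui : Integrable u P) {w : ℕ} (hw : w ≤ J) :
    ∫ ω, u ω * psiS P X Z S J w ω ∂P = ∫ ω, u ω * pscore P X S J w ω ∂P := by
  rcases eq_or_ne w 0 with rfl | hw0
  · simp [psiS, pscore]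
  have hwI : w ∈ Finset.Icc 1 J := Finset.mem_Icc.mpr ⟨Nat.one_le_iff_ne_zero.mpr hw0, hw⟩
  have huS : Integrable (fun ω => u ω * S w ω) P :=
    hui.mul_bdd (hset.hSm w).aestronglyMeasurable (ae_of_all _ (hset.norm_S_le_one w))
  have hup := hset.integrable_mul_pscore hui w
  have htower : ∫ ω, u ω * S w ω ∂P = ∫ ω, u ω * pscore P X S J w ω ∂P := by
    rw [pscore_of_mem_Icc hwI]
    exact integral_mul_condExp hset.mX_le hu.stronglyMeasurable huS (hset.integrable_S w)
  have hVm : Measurable[mXSY X S Y] fun ω => u ω * (S w ω - pscore P X S J w ω) :=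
    (hu.mono mX_le_mXSY le_rfl).mul
      ((measurable_S_mXSY w).sub ((measurable_pscore w).mono mX_le_mXSY le_rfl))
  have hVi : Integrable (fun ω => u ω * (S w ω - pscore P X S J w ω)) P :=
    (huS.sub hup).congr (ae_of_all _ fun ω => (mul_sub _ _ _).symm)
  have hV0 : ∫ ω, u ω * (S w ω - pscore P X S J w ω) ∂P = 0 := by
    simp only [mul_sub]
    rw [integral_sub huS hup, htower, sub_self]
  calc ∫ ω, u ω * psiS P X Z S J w ω ∂P
      = ∫ ω, indic Z w ω * (u ω * (S w ω - pscore P X S J w ω)) / piZ P Z w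
          + u ω * pscore P X S J w ω ∂P := by
        congr 1; ext ω; rw [hset.psiS_eq hw0]; ring
    _ = ∫ ω, u ω * pscore P X S J w ω ∂P := by
        rw [integral_add ((integrable_indic_mul hset.hZ hVi w).div_const _) hup, integral_div,
          integral_indic_mul_of_indepFun hset.hZ hrand.1 hVm hVi, hV0, mul_zero, zero_div,
          zero_add]

theorem Setup.condExp_Y_mul_S [IsFiniteMeasure P] (hset : Setup P J X Z S Y)
    (hrand : Randomization P J X Z S Y) {z : ℕ} (hz : z ∈ Finset.Icc 1 J) {mz : Ω → ℝ}
    (hmz : (fun ω => mz ω * piZ P Z z * pscore P X S J z ω)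
      =ᵐ[P] P[fun ω => Yobs J Z Y ω * Sobs J Z S ω * indic Z z ω | mX X]) :
    P[fun ω => Y z ω * S z ω | mX X] =ᵐ[P] fun ω => mz ω * pscore P X S J z ω := by
  have hobs : (fun ω => Yobs J Z Y ω * Sobs J Z S ω * indic Z z ω)
      = fun ω => indic Z z ω * (Y z ω * S z ω) := by
    ext ω
    by_cases h : Z ω = z
    · rw [hset.yobs_eq, hset.sobs_eq, h]; ring
    · simp [indic, h]
  have hind := condExp_indic_mul_of_indepFun (H := fun ω => Y z ω * S z ω) hset.hX mX_le_mXSY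
    hset.hZ hrand.1 ((measurable_Y_mXSY z).mul (measurable_S_mXSY z)) (hset.integrable_Y_mul_S z) z
  rw [hobs] at hmz
  filter_upwards [hmz, hind] with ω h1 h2
  refine mul_left_cancel₀ (hrand.2 z hz).ne' ?_
  rw [← h2, ← h1]
  ring

theorem Monotonicity.ae_monotoneOn (hmono : Monotonicity P J S) :
    ∀ᵐ ω ∂P, MonotoneOn (fun w => S w ω) (Set.Icc 1 J) := by
  have : ∀ᵐ ω ∂P, ∀ b ∈ Finset.Icc 1 J, ∀ a ∈ Finset.Icc 1 J, a ≤ b → S a ω ≤ S b ω :=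
    (Filter.eventually_all_finset _).2 fun b hb => (Filter.eventually_all_finset _).2 fun a ha =>
      Filter.eventually_imp_distrib_left.2 (hmono b hb a ha)
  filter_upwards [this] with ω h a ha b hb hab
  exact h b (by simpa using hb) a (by simpa using ha) hab

theorem Setup.ae_threshold (hset : Setup P J X Z S Y) (hmono : Monotonicity P J S) :
    ∀ᵐ ω ∂P, ∃ n ≤ J, Gsum J S ω = n ∧
      ∀ w ∈ Finset.Icc 1 J, S w ω = if J < w + n then 1 else 0 :=
  hmono.ae_monotoneOn.mono fun ω hω => exists_threshold_of_monotoneOn (hset.hS01 · ω) hω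

-- `S 0` is unconstrained, so the stratum `g = J`, where `J - g = 0`, is set apart.
theorem Setup.indG_ae_eq (hset : Setup P J X Z S Y) (hmono : Monotonicity P J S) {g : ℕ}
    (hg : g ∈ Finset.Icc 1 J) :
    ∀ᵐ ω ∂P, indG J S g ω = S (J - g + 1) ω - if g = J then 0 else S (J - g) ω := by
  have hg' := Finset.mem_Icc.mp hg
  filter_upwards [hset.ae_threshold hmono] with ω ⟨n, hnJ, hG, hS⟩
  simp only [indG_apply, hG, Nat.cast_inj]
  rw [hS _ (Finset.mem_Icc.mpr ⟨by omega, by omega⟩)]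
  rcases eq_or_ne g J with rfl | hgJ
  · simp only [if_true, sub_zero]
    exact if_congr (by omega) rfl rfl
  · rw [if_neg hgJ, hS _ (Finset.mem_Icc.mpr ⟨by omega, by omega⟩)]
    split_ifs <;> (try norm_num) <;> omega

theorem Setup.sum_indG_ae_eq (hset : Setup P J X Z S Y) (hmono : Monotonicity P J S) {z : ℕ}
    (hz : z ∈ Finset.Icc 1 J) :
    ∀ᵐ ω ∂P, ∑ g ∈ Finset.Icc (J - z + 1) J, indG J S g ω = S z ω := by
  have hz' := Finset.mem_Icc.mp hz
  filter_upwards [hset.ae_threshold hmono] with ω ⟨n, hnJ, hG, hS⟩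
  simp only [indG_apply, hG, Nat.cast_inj]
  rw [Finset.sum_ite_eq, hS z hz]
  exact if_congr (by simp only [Finset.mem_Icc]; omega) rfl rfl

theorem Setup.eg_ae_eq [IsFiniteMeasure P] (hset : Setup P J X Z S Y)
    (hmono : Monotonicity P J S) {g : ℕ} (hg : g ∈ Finset.Icc 1 J) :
    eg P X J S g =ᵐ[P] fun ω => pscore P X S J (J - g + 1) ω - pscore P X S J (J - g) ω := by
  have hg' := Finset.mem_Icc.mp hg
  have hI : J - g + 1 ∈ Finset.Icc 1 J := Finset.mem_Icc.mpr ⟨by omega, by omega⟩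
  have hind := condExp_congr_ae (m := mX X) (hset.indG_ae_eq hmono hg)
  rcases eq_or_ne g J with rfl | hgJ
  · simp only [if_true, sub_zero] at hind
    refine hind.trans (Filter.EventuallyEq.of_eq ?_)
    rw [pscore_of_mem_Icc hI]
    ext ω
    simp [pscore]
  · simp only [if_neg hgJ] at hind
    refine hind.trans ((condExp_sub (hset.integrable_S _) (hset.integrable_S _) _).trans
      (Filter.EventuallyEq.of_eq ?_))
    rw [pscore_of_mem_Icc hI, pscore_of_mem_Icc (Finset.mem_Icc.mpr ⟨by omega, by omega⟩)]
    rfl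

theorem Setup.measurableSet_G (hset : Setup P J X Z S Y) (g : ℕ) :
    MeasurableSet {ω | Gsum J S ω = g} :=
  (Finset.measurable_sum _ fun w _ => hset.hSm w) (measurableSet_singleton _)

theorem Setup.integrable_indG [IsFiniteMeasure P] (hset : Setup P J X Z S Y) (g : ℕ) :
    Integrable (indG J S g) P :=
  (integrable_const 1).indicator (hset.measurableSet_G g)

theorem Setup.condExp_Y_mul_indG [IsFiniteMeasure P] (hset : Setup P J X Z S Y)
    (hmono : Monotonicity P J S) (hPI : PrincipalIgnorability P J X S Y) {z g : ℕ}
    (hz : z ∈ Finset.Icc 1 J) (hg : g ∈ Finset.Icc (J - z + 1) J)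
    (hpz : ∀ᵐ ω ∂P, pscore P X S J z ω ≠ 0) {mz : Ω → ℝ}
    (hYS : P[fun ω => Y z ω * S z ω | mX X] =ᵐ[P] fun ω => mz ω * pscore P X S J z ω) :
    P[fun ω => Y z ω * indG J S g ω | mX X] =ᵐ[P] fun ω => mz ω * eg P X J S g ω := by
  set s := Finset.Icc (J - z + 1) J
  have hindG : ∀ g' ∈ s, Integrable (indG J S g') P := fun g' _ => hset.integrable_indG g'
  have hYindG : ∀ g' ∈ s, Integrable (fun ω => Y z ω * indG J S g' ω) P := fun g' hg' =>
    (hset.hYint z).mul_bdd (c := 1) (hindG g' hg').aestronglyMeasurable (ae_of_all _ fun ω => by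
      rw [indG_apply]; split_ifs <;> simp)
  have hsum := hset.sum_indG_ae_eq hmono hz
  have he : ∀ᵐ ω ∂P, ∑ g' ∈ s, eg P X J S g' ω = pscore P X S J z ω := by
    have h := (condExp_finsetSum hindG (mX X)).symm.trans
      (condExp_congr_ae (hsum.mono fun ω h => (Finset.sum_apply ω s _).trans h))
    rw [← pscore_of_mem_Icc hz] at h
    filter_upwards [h] with ω h
    rw [← h, Finset.sum_apply]
    rfl
  have ha : ∀ᵐ ω ∂P, ∑ g' ∈ s, P[fun ω' => Y z ω' * indG J S g' ω' | mX X] ω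
      = mz ω * pscore P X S J z ω := by
    have h := (condExp_finsetSum hYindG (mX X)).symm.trans
      ((condExp_congr_ae (hsum.mono fun ω h => ?_)).trans hYS)
    · filter_upwards [h] with ω h
      rw [← h, Finset.sum_apply]
    · rw [Finset.sum_apply, ← Finset.mul_sum, h]
  have hcross : ∀ᵐ ω ∂P, ∀ g' ∈ s, P[fun ω' => Y z ω' * indG J S g ω' | mX X] ω
      * eg P X J S g' ω = P[fun ω' => Y z ω' * indG J S g' ω' | mX X] ω * eg P X J S g ω :=
    (Filter.eventually_all_finset s).2 fun g' hg' => hPI z hz g hg g' hg'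
  filter_upwards [hcross, he, ha, hpz] with ω hcross he ha hpz
  exact eq_mul_of_forall_mul_eq_mul (s := s)
    (a := fun j => P[fun ω' => Y z ω' * indG J S j ω' | mX X] ω) (e := fun j => eg P X J S j ω)
    hcross (by rw [ha, he]) (by rwa [he])

theorem Setup.integrable_mul_psiS_sub_psiS [IsFiniteMeasure P]
    (hset : Setup P J X Z S Y) {u : Ω → ℝ} (hu : Integrable u P) (a b : ℕ) :
    Integrable (fun ω => u ω * (psiS P X Z S J a ω - psiS P X Z S J b ω)) P :=
  ((hset.integrable_mul_psiS hu a).sub (hset.integrable_mul_psiS hu b)).congr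
    (ae_of_all _ fun _ => (mul_sub _ _ _).symm)

theorem Setup.integral_mul_psiS_sub_psiS [IsFiniteMeasure P] (hset : Setup P J X Z S Y)
    (hrand : Randomization P J X Z S Y) (hmono : Monotonicity P J S) {g : ℕ}
    (hg : g ∈ Finset.Icc 1 J) {u : Ω → ℝ} (hu : Measurable[mX X] u) (hui : Integrable u P) :
    ∫ ω, u ω * (psiS P X Z S J (J - g + 1) ω - psiS P X Z S J (J - g) ω) ∂P
      = ∫ ω, u ω * eg P X J S g ω ∂P := by
  have hg' := Finset.mem_Icc.mp hg
  simp only [mul_sub]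
  rw [integral_sub (hset.integrable_mul_psiS hui _) (hset.integrable_mul_psiS hui _),
    hset.integral_mul_psiS hrand hu hui (by omega), hset.integral_mul_psiS hrand hu hui (by omega),
    ← integral_sub (hset.integrable_mul_pscore hui _) (hset.integrable_mul_pscore hui _)]
  refine integral_congr_ae ?_
  filter_upwards [hset.eg_ae_eq hmono hg] with ω h
  rw [h, mul_sub]

theorem Setup.integral_sub_mul_eg_eq_zero [IsFiniteMeasure P] (hset : Setup P J X Z S Y)
    {z g : ℕ} {mz : Ω → ℝ}
    (hYG : P[fun ω => Y z ω * indG J S g ω | mX X] =ᵐ[P] fun ω => mz ω * eg P X J S g ω)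
    (hPG : (P {ω | Gsum J S ω = g}).toReal ≠ 0) :
    ∫ ω, (mz ω - (∫ ω', Y z ω' * indG J S g ω' ∂P) / (P {ω' | Gsum J S ω' = g}).toReal)
      * eg P X J S g ω ∂P = 0 := by
  have hEYG : ∫ ω, Y z ω * indG J S g ω ∂P = ∫ ω, mz ω * eg P X J S g ω ∂P :=
    (integral_condExp hset.mX_le).symm.trans (integral_congr_ae hYG)
  have hEeg : ∫ ω, eg P X J S g ω ∂P = (P {ω | Gsum J S ω = g}).toReal := by
    rw [eg, integral_condExp hset.mX_le, indG, integral_indicator_const _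
      (hset.measurableSet_G g), smul_eq_mul, mul_one, measureReal_def]
  have heg : Integrable (eg P X J S g) P := integrable_condExp
  simp only [sub_mul]
  rw [integral_sub (integrable_condExp.congr hYG) (heg.const_mul _),
    integral_const_mul, hEeg, div_mul_cancel₀ _ hPG, hEYG, sub_self]

/-- `ψ_{YS,z}` of the paper, with the outcome regression `m_z` as a parameter. -/
def psiYS (P : Measure Ω) (X : Ω → 𝒳) (Z : Ω → ℕ) (S Y : ℕ → Ω → ℝ) (J z : ℕ)
    (mz : Ω → ℝ) : Ω → ℝ :=
  fun ω => indic Z z ω * (Yobs J Z Y ω * Sobs J Z S ω - mz ω * pscore P X S J z ω) / piZ P Z z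
    + mz ω * pscore P X S J z ω

theorem Setup.psiYS_sub_mul_psiS (hset : Setup P J X Z S Y) {z : ℕ} (hz : z ≠ 0)
    (mz : Ω → ℝ) (ω : Ω) :
    psiYS P X Z S Y J z mz ω - mz ω * psiS P X Z S J z ω
      = indic Z z ω * ((Y z ω - mz ω) * S z ω) / piZ P Z z := by
  rw [hset.psiS_eq hz]
  simp only [psiYS]
  by_cases h : Z ω = z
  · rw [hset.yobs_eq, hset.sobs_eq, h]; ring
  · simp [indic, h]

theorem Setup.integrable_mul_Y_sub_mul_S (hset : Setup P J X Z S Y)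
    {z : ℕ} {mz q : Ω → ℝ} (hmz : Integrable mz P) (hq : AEStronglyMeasurable q P) {C : ℝ}
    (hqC : ∀ᵐ ω ∂P, ‖q ω‖ ≤ C) :
    Integrable (fun ω => q ω * ((Y z ω - mz ω) * S z ω)) P :=
  (((hset.hYint z).sub hmz).mul_bdd (hset.hSm z).aestronglyMeasurable
    (ae_of_all _ (hset.norm_S_le_one z))).bdd_mul hq hqC

theorem Setup.integrable_mul_psiYS_sub (hset : Setup P J X Z S Y)
    {z : ℕ} (hz : z ≠ 0) {mz q : Ω → ℝ} (hmz : Integrable mz P) (hq : AEStronglyMeasurable q P)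
    {C : ℝ} (hqC : ∀ᵐ ω ∂P, ‖q ω‖ ≤ C) :
    Integrable (fun ω => q ω * (psiYS P X Z S Y J z mz ω - mz ω * psiS P X Z S J z ω)) P :=
  ((integrable_indic_mul hset.hZ (hset.integrable_mul_Y_sub_mul_S (z := z) hmz hq hqC)
    z).div_const (piZ P Z z)).congr
      (ae_of_all _ fun ω => by dsimp only; rw [hset.psiYS_sub_mul_psiS hz]; ring)

theorem Setup.integral_mul_psiYS_sub [IsFiniteMeasure P] (hset : Setup P J X Z S Y)
    (hrand : Randomization P J X Z S Y) {z : ℕ} (hz : z ∈ Finset.Icc 1 J) {mz q : Ω → ℝ}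
    (hmzm : Measurable[mX X] mz) (hmzi : Integrable mz P)
    (hYS : P[fun ω => Y z ω * S z ω | mX X] =ᵐ[P] fun ω => mz ω * pscore P X S J z ω)
    (hq : Measurable[mX X] q) {C : ℝ} (hqC : ∀ᵐ ω ∂P, ‖q ω‖ ≤ C) :
    ∫ ω, q ω * (psiYS P X Z S Y J z mz ω - mz ω * psiS P X Z S J z ω) ∂P = 0 := by
  have hz0 : z ≠ 0 := by have := (Finset.mem_Icc.mp hz).1; omega
  have hqa := (hq.mono hset.mX_le le_rfl).aestronglyMeasurable (μ := P)
  have hHi := hset.integrable_mul_Y_sub_mul_S (z := z) hmzi hqa hqC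
  have hHm : Measurable[mXSY X S Y] fun ω => q ω * ((Y z ω - mz ω) * S z ω) :=
    (hq.mono mX_le_mXSY le_rfl).mul (((measurable_Y_mXSY z).sub
      (hmzm.mono mX_le_mXSY le_rfl)).mul (measurable_S_mXSY z))
  have hqYS : Integrable (fun ω => q ω * (Y z ω * S z ω)) P :=
    (hset.integrable_Y_mul_S z).bdd_mul hqa hqC
  have hqmzS : Integrable (fun ω => q ω * mz ω * S z ω) P :=
    (hmzi.bdd_mul hqa hqC).mul_bdd (hset.hSm z).aestronglyMeasurable
      (ae_of_all _ (hset.norm_S_le_one z))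
  have hYpart : ∫ ω, q ω * (Y z ω * S z ω) ∂P = ∫ ω, q ω * mz ω * pscore P X S J z ω ∂P := by
    rw [integral_mul_condExp hset.mX_le hq.stronglyMeasurable hqYS (hset.integrable_Y_mul_S z)]
    exact integral_congr_ae (hYS.mono fun ω h => by dsimp only at h ⊢; rw [h, mul_assoc])
  have hSpart : ∫ ω, q ω * mz ω * S z ω ∂P = ∫ ω, q ω * mz ω * pscore P X S J z ω ∂P := by
    rw [pscore_of_mem_Icc hz]
    exact integral_mul_condExp hset.mX_le (hq.mul hmzm).stronglyMeasurable hqmzS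
      (hset.integrable_S z)
  have hH0 : ∫ ω, q ω * ((Y z ω - mz ω) * S z ω) ∂P = 0 := by
    rw [← sub_eq_zero.mpr (hYpart.trans hSpart.symm), ← integral_sub hqYS hqmzS]
    congr 1; ext ω; ring
  calc ∫ ω, q ω * (psiYS P X Z S Y J z mz ω - mz ω * psiS P X Z S J z ω) ∂P
      = ∫ ω, indic Z z ω * (q ω * ((Y z ω - mz ω) * S z ω)) / piZ P Z z ∂P := by
        congr 1; ext ω; rw [hset.psiYS_sub_mul_psiS hz0]; ring
    _ = 0 := by
        rw [integral_div, integral_indic_mul_of_indepFun hset.hZ hrand.1 hHm hHi, hH0, mul_zero,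
          zero_div]

end Model

/-- **mean-zero property of the efficient influence function.**
Under randomization, monotonicity, principal ignorability and positivity, with
`μ_g(z) := E[Y_z·1(G=g)]/P(G=g)`, the efficient influence function numerator `ξ_{zg}` has
mean zero. -/
theorem statement9 (P : Measure Ω) [IsProbabilityMeasure P] (J : ℕ)
    (X : Ω → 𝒳) (Z : Ω → ℕ) (S Y : ℕ → Ω → ℝ)
    (hset : Setup P J X Z S Y)
    (hrand : Randomization P J X Z S Y)
    (hmono : Monotonicity P J S)
    (hPI : PrincipalIgnorability P J X S Y)
    (hpos : Positivity P J X S)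
    (z g : ℕ) (hz : z ∈ Finset.Icc 1 J) (hg : g ∈ Finset.Icc (J - z + 1) J)
    (hPG : 0 < (P {ω | Gsum J S ω = (g : ℝ)}).toReal)
    (mz : Ω → ℝ) (hmzm : Measurable[mX X] mz)
    (hmz : (fun ω => mz ω * piZ P Z z * pscore P X S J z ω)
      =ᵐ[P] P[fun ω => Yobs J Z Y ω * Sobs J Z S ω * indic Z z ω | mX X]) :
    ∫ ω,
      (((pscore P X S J (J - g + 1) ω - pscore P X S J (J - g) ω) / pscore P X S J z ω)
          * ((indic Z z ω * (Yobs J Z Y ω * Sobs J Z S ω - mz ω * pscore P X S J z ω)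
                / piZ P Z z
              + mz ω * pscore P X S J z ω)
            - mz ω * psiS P X Z S J z ω)
        + (mz ω
            - (∫ ω', Y z ω' * indG J S g ω' ∂P) / (P {ω' | Gsum J S ω' = (g : ℝ)}).toReal)
          * (psiS P X Z S J (J - g + 1) ω - psiS P X Z S J (J - g) ω)) ∂P = 0 := by
  obtain ⟨c, hc, hcpos⟩ := hpos
  have hz0 : z ≠ 0 := by have := (Finset.mem_Icc.mp hz).1; omega
  have hgI : g ∈ Finset.Icc 1 J := by
    have := Finset.mem_Icc.mp hg; exact Finset.mem_Icc.mpr ⟨by omega, this.2⟩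
  have hcz := hcpos z hz
  have hYS := hset.condExp_Y_mul_S hrand hz hmz
  have hmzi : Integrable mz P := integrable_of_mul_eq hc
    (hmzm.mono hset.mX_le le_rfl).aestronglyMeasurable integrable_condExp hcz hYS.symm
  have hYG := hset.condExp_Y_mul_indG hmono hPI hz hg (hcz.mono fun _ h => (hc.trans_le h).ne') hYS
  have hq : Measurable[mX X] fun ω =>
      (pscore P X S J (J - g + 1) ω - pscore P X S J (J - g) ω) / pscore P X S J z ω :=
    ((measurable_pscore _).sub (measurable_pscore _)).div (measurable_pscore _)
  have hqC := hset.norm_pscore_sub_div_le hc (a := J - g + 1) (b := J - g) hcz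
  refine (integral_add (hset.integrable_mul_psiYS_sub hz0 hmzi
    (hq.mono hset.mX_le le_rfl).aestronglyMeasurable hqC)
    (hset.integrable_mul_psiS_sub_psiS (hmzi.sub (integrable_const _)) _ _)).trans ?_
  rw [hset.integral_mul_psiYS_sub hrand hz hmzm hmzi hYS hq hqC, zero_add]
  exact (hset.integral_mul_psiS_sub_psiS hrand hmono hgI (hmzm.sub measurable_const)
    (hmzi.sub (integrable_const _))).trans
    (hset.integral_sub_mul_eg_eq_zero hYG hPG.ne')

end TruncationByDeath
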